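/- Fix 2 ≤ m ≤ n−1 and let H(ψ), H(χ) ∈ Z_{n,m}. Then H(ψ) and H(χ) are isomorphic or anti-isomorphic if and only if there exist σ ∈ S_{{m+1,…,n}}, τ ∈ S_m with 1^τ = 1, and π ∈ S_2 such that ψ(x₁, x₂) = χ(x_{1^π}^σ, x_{2^π}^σ)^τ for all x₁, x₂ ∈ {m+1,…,n}. -/

import Mathlib

/-!
Split `{1,…,n}` as `A ⊕ B` with `A = {1,…,m}` and `B = {m+1,…,n}`; then `H(ψ)` is `nilMul 1 ψ`,
and an anti-isomorphism `H(ψ) → H(χ)` is an isomorphism `H(ψ) → H(χ')` with `χ'(x, y) = χ(y, x)`.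
Every product lies in `A`, and every element of `A` is a product (`ψ` hits `A ∖ {1}`, and
`1 = 1 · 1`), so an isomorphism maps `A` into `A`; as `A` is finite it then permutes `A` and `B`
separately, say by `τ⁻¹` and `σ`. It fixes the zero `1`, and on products of two elements of `B` it
says exactly `ψ = τ ∘ χ ∘ (σ × σ)`.
-/

section

open Equiv Sum

variable {α β γ A B : Type*}

def Equiv.Intertwines (e : α ≃ β) (f : α → α → α) (g : β → β → β) : Prop :=
  ∀ x y, e (f x y) = g (e x) (e y)

namespace Equiv.Intertwines

variable {e : α ≃ β} {f : α → α → α} {g : β → β → β}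

theorem symm (h : e.Intertwines f g) : e.symm.Intertwines g f := fun x y => by
  rw [e.symm_apply_eq, h, apply_symm_apply, apply_symm_apply]

theorem trans {e' : β ≃ γ} {k : γ → γ → γ} (h : e.Intertwines f g) (h' : e'.Intertwines g k) :
    (e.trans e').Intertwines f k := fun x y => by
  rw [trans_apply, h, h']; rfl

theorem flip (h : e.Intertwines f g) : e.Intertwines (_root_.flip f) (_root_.flip g) :=
  fun x y => h y x

theorem exists_perm_iff {f' : α → α → α} {g' : β → β → β} (h : e.Intertwines f g)
    (h' : e.Intertwines f' g') :
    (∃ π : Perm α, π.Intertwines f f') ↔ ∃ π : Perm β, π.Intertwines g g' :=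
  ⟨fun ⟨π, hπ⟩ => ⟨e.symm.trans (π.trans e), h.symm.trans (hπ.trans h')⟩,
    fun ⟨π, hπ⟩ => ⟨e.trans (π.trans e.symm), h.trans (hπ.trans h'.symm)⟩⟩

end Equiv.Intertwines

/-- The multiplication of `H(ψ)`: `A` plays the role of `{1,…,m}` with zero `a₀ = 1`, and `B`
that of `{m+1,…,n}`. -/
def nilMul (a₀ : A) (ψ : B → B → A) : A ⊕ B → A ⊕ B → A ⊕ B
  | inr x, inr y => inl (ψ x y)
  | inl _, _ => inl a₀
  | inr _, inl _ => inl a₀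

section nilMul

variable (a₀ : A)

theorem nilMul_mem_range_inl (ψ : B → B → A) (u v : A ⊕ B) :
    nilMul a₀ ψ u v ∈ Set.range inl := by
  cases u <;> cases v <;> simp [nilMul]

theorem flip_nilMul (ψ : B → B → A) : _root_.flip (nilMul a₀ ψ) = nilMul a₀ (_root_.flip ψ) := by
  funext u v; cases u <;> cases v <;> rfl

theorem sumCongr_intertwines_nilMul_iff (ψ χ : B → B → A) (τ : Perm A) (σ : Perm B) :
    (sumCongr τ σ).Intertwines (nilMul a₀ ψ) (nilMul a₀ χ) ↔
      τ a₀ = a₀ ∧ ∀ x y, τ (ψ x y) = χ (σ x) (σ y) := by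
  constructor
  · intro h
    exact ⟨inl_injective (h (inl a₀) (inl a₀)), fun x y => inl_injective (h (inr x) (inr y))⟩
  · rintro ⟨h₀, h⟩ (a | x) (b | y) <;> simp [nilMul, h₀, h]

theorem mapsTo_range_inl_of_intertwines_nilMul {ψ χ : B → B → A}
    (hψ : ∀ a, a ≠ a₀ → ∃ x y, ψ x y = a) {π : Perm (A ⊕ B)}
    (hπ : π.Intertwines (nilMul a₀ ψ) (nilMul a₀ χ)) :
    Set.MapsTo π (Set.range inl) (Set.range inl) := by
  rintro _ ⟨a, rfl⟩
  obtain ⟨u, v, huv⟩ : ∃ u v, nilMul a₀ ψ u v = inl a := by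
    by_cases ha : a = a₀
    · exact ⟨inl a₀, inl a₀, by rw [ha]; rfl⟩
    · obtain ⟨x, y, rfl⟩ := hψ a ha
      exact ⟨inr x, inr y, rfl⟩
  rw [← huv, hπ]
  exact nilMul_mem_range_inl a₀ χ _ _

theorem exists_perm_intertwines_nilMul_iff [Finite A] [Finite B] {ψ : B → B → A}
    (hψ : ∀ a, a ≠ a₀ → ∃ x y, ψ x y = a) (χ : B → B → A) :
    (∃ π : Perm (A ⊕ B), π.Intertwines (nilMul a₀ ψ) (nilMul a₀ χ)) ↔
      ∃ (σ : Perm B) (τ : Perm A), τ a₀ = a₀ ∧ ∀ x y, τ (χ (σ x) (σ y)) = ψ x y := by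
  constructor
  · rintro ⟨π, hπ⟩
    obtain ⟨⟨τ, σ⟩, rfl⟩ := Perm.mem_sumCongrHom_range_of_perm_mapsTo_inl
      (mapsTo_range_inl_of_intertwines_nilMul a₀ hψ hπ)
    obtain ⟨h₀, h⟩ := (sumCongr_intertwines_nilMul_iff a₀ ψ χ τ σ).1 hπ
    exact ⟨σ, τ.symm, by rw [τ.symm_apply_eq, h₀], fun x y => by rw [τ.symm_apply_eq, h]⟩
  · rintro ⟨σ, τ, h₀, h⟩
    refine ⟨sumCongr τ.symm σ, (sumCongr_intertwines_nilMul_iff a₀ ψ χ τ.symm σ).2 ⟨?_, ?_⟩⟩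
    · rw [τ.symm_apply_eq, h₀]
    · intro x y; rw [τ.symm_apply_eq, h]

end nilMul

def finEquivSumGe {m n : ℕ} (h : m ≤ n) : Fin n ≃ Fin m ⊕ {x : Fin n // m ≤ x.val} where
  toFun x := if hx : x.val < m then inl ⟨x, hx⟩ else inr ⟨x, not_lt.1 hx⟩
  invFun := Sum.elim (Fin.castLE h) Subtype.val
  left_inv x := by dsimp only; split_ifs <;> rfl
  right_inv := by
    rintro (a | b)
    · simp
    · simp [not_lt.2 b.2]

theorem finEquivSumGe_symm_intertwines {m n : ℕ} (hm : 0 < m) (h : m ≤ n)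
    (ψ : {x : Fin n // m ≤ x.val} → {x : Fin n // m ≤ x.val} → Fin m) (mul : Fin n → Fin n → Fin n)
    (hmul : ∀ x y, mul x y = if hxy : m ≤ x.val ∧ m ≤ y.val then
      Fin.castLE h (ψ ⟨x, hxy.1⟩ ⟨y, hxy.2⟩) else ⟨0, hm.trans_le h⟩) :
    (finEquivSumGe h).symm.Intertwines (nilMul ⟨0, hm⟩ ψ) mul := by
  rintro (a | x) (b | y)
  case inr.inr => exact ((hmul x y).trans (dif_pos ⟨x.2, y.2⟩)).symm
  all_goals simp [finEquivSumGe, nilMul, hmul, Fin.ext_iff]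

end

/-- For H(ψ), H(χ) ∈ Z_{n,m}: the semigroups are isomorphic or anti-isomorphic iff there
are σ ∈ S_A (A = {m+1,…,n}), τ ∈ S_m fixing the zero, and a choice π ∈ S_2 such that
ψ(x₁,x₂) = χ(x_{1^π}^σ, x_{2^π}^σ)^τ for all x₁, x₂ ∈ A. -/
theorem stmt16 (n m : ℕ) (hm2 : 2 ≤ m) (hmn : m ≤ n - 1)
    (ψ χ : {x : Fin n // m ≤ x.val} → {x : Fin n // m ≤ x.val} → Fin m)
    (hψ : ∀ b : Fin m, b.val ≠ 0 → ∃ x y, ψ x y = b)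
    (mulψ mulχ : Fin n → Fin n → Fin n)
    (hmulψ : ∀ x y, mulψ x y =
      if h : m ≤ x.val ∧ m ≤ y.val then
        Fin.castLE (by omega) (ψ ⟨x, h.1⟩ ⟨y, h.2⟩) else ⟨0, by omega⟩)
    (hmulχ : ∀ x y, mulχ x y =
      if h : m ≤ x.val ∧ m ≤ y.val then
        Fin.castLE (by omega) (χ ⟨x, h.1⟩ ⟨y, h.2⟩) else ⟨0, by omega⟩) :
    (∃ π : Equiv.Perm (Fin n),
        (∀ x y, π (mulψ x y) = mulχ (π x) (π y)) ∨
        (∀ x y, π (mulψ x y) = mulχ (π y) (π x))) ↔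
    (∃ (σ : Equiv.Perm {x : Fin n // m ≤ x.val}) (τ : Equiv.Perm (Fin m)),
      (τ ⟨0, by omega⟩).val = 0 ∧
      ((∀ x y, τ (χ (σ x) (σ y)) = ψ x y) ∨
       (∀ x y, τ (χ (σ y) (σ x)) = ψ x y))) := by
  have hm : 0 < m := by omega
  have hn : m ≤ n := by omega
  have eψ := (finEquivSumGe_symm_intertwines hm hn ψ mulψ hmulψ).symm
  have eχ := (finEquivSumGe_symm_intertwines hm hn χ mulχ hmulχ).symm
  have eχ' := eχ.flip
  rw [flip_nilMul] at eχ'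
  have hψ' : ∀ a, a ≠ ⟨0, hm⟩ → ∃ x y, ψ x y = a := fun a ha => hψ a fun h => ha (Fin.ext h)
  calc _ ↔ (∃ π : Equiv.Perm (Fin n), π.Intertwines mulψ mulχ) ∨
        ∃ π : Equiv.Perm (Fin n), π.Intertwines mulψ (flip mulχ) := exists_or
    _ ↔ _ := by
      rw [eψ.exists_perm_iff eχ, eψ.exists_perm_iff eχ', exists_perm_intertwines_nilMul_iff _ hψ',
        exists_perm_intertwines_nilMul_iff _ hψ']
      simp only [Fin.ext_iff, and_or_left, exists_or]
      rfl
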